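/- arXiv:1803.06006 — 5 statements merged into one kernel-verified Lean document; each statement's English description precedes it below -/
import Mathlib

section
/- Let G be a matrix Lie group with Lie algebra 𝔤 satisfying the Lohe closure property (Z - Z⁻¹ ∈ 𝔤 for all Z ∈ G). Then for any Y, Z ∈ G and Q ∈ 𝔤, the matrix Y·Q·Z + Z⁻¹·Q·Y⁻¹ lies in 𝔤. -/
/-!
The Lie algebra `𝔤 = {Q | ∀ t, exp (t • Q) ∈ G}` of a closed set `G` is a closed real cone, so it
contains the velocity `F'(0)` of every differentiable curve `F` in `𝔤` with `F 0 = 0`, being the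
limit of the difference quotients `u⁻¹ • F u`. The Lohe property supplies such curves: applied to
`exp (u • P) * exp (u • R)` it gives a curve of velocity `2 • (P + R)`, so `𝔤` is additive, and
applied to `Y * exp (u • Q) * Z` it gives, after subtracting its value at `0`, a curve of velocity
`Y * Q * Z + Z⁻¹ * Q * Y⁻¹`.
-/

open NormedSpace Filter

attribute [local instance] Matrix.linftyOpNormedRing Matrix.linftyOpNormedAlgebra

theorem IsClosed.mem_of_hasDerivAt_zero {E : Type*} [NormedAddCommGroup E] [NormedSpace ℝ E]
    {S : Set E} (hS : IsClosed S) (hsmul : ∀ c : ℝ, ∀ x ∈ S, c • x ∈ S)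
    {F : ℝ → E} {D : E} (hF : ∀ u, F u ∈ S) (hF0 : F 0 = 0) (hD : HasDerivAt F D 0) :
    D ∈ S := by
  refine hS.mem_of_tendsto (hasDerivAt_iff_tendsto_slope.mp hD) (Eventually.of_forall fun u => ?_)
  rw [slope_def_module, hF0, sub_zero, sub_zero]
  exact hsmul _ _ (hF u)

def expLieAlgebra {𝔸 : Type*} [Ring 𝔸] [TopologicalSpace 𝔸] [IsTopologicalRing 𝔸] [Module ℝ 𝔸]
    (G : Set 𝔸) : Set 𝔸 :=
  {Q | ∀ t : ℝ, exp (t • Q) ∈ G}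

section Topological

variable {𝔸 : Type*} [Ring 𝔸] [TopologicalSpace 𝔸] [IsTopologicalRing 𝔸] [Module ℝ 𝔸]

theorem smul_mem_expLieAlgebra {G : Set 𝔸} {Q : 𝔸} (hQ : Q ∈ expLieAlgebra G) (c : ℝ) :
    c • Q ∈ expLieAlgebra G := fun t => by
  rw [smul_smul]
  exact hQ (t * c)

theorem neg_mem_expLieAlgebra {G : Set 𝔸} {Q : 𝔸} (hQ : Q ∈ expLieAlgebra G) :
    -Q ∈ expLieAlgebra G := by
  simpa using smul_mem_expLieAlgebra hQ (-1)

end Topological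

section Normed

variable {𝔸 : Type*} [NormedRing 𝔸] [NormedAlgebra ℝ 𝔸]

theorem isClosed_expLieAlgebra [CompleteSpace 𝔸] {G : Set 𝔸} (hG : IsClosed G) :
    IsClosed (expLieAlgebra G) := by
  -- `exp_continuous` is stated for normed `ℚ`-algebras
  let := NormedAlgebra.restrictScalars ℚ ℝ 𝔸
  rw [show expLieAlgebra G = ⋂ t : ℝ, (fun Q => exp (t • Q)) ⁻¹' G by ext; simp [expLieAlgebra]]
  exact isClosed_iInter fun t => hG.preimage (exp_continuous.comp (continuous_const_smul t))

theorem mem_expLieAlgebra_of_hasDerivAt_zero [CompleteSpace 𝔸] {G : Set 𝔸} (hG : IsClosed G)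
    {F : ℝ → 𝔸} {D : 𝔸} (hF : ∀ u, F u ∈ expLieAlgebra G) (hF0 : F 0 = 0)
    (hD : HasDerivAt F D 0) : D ∈ expLieAlgebra G :=
  (isClosed_expLieAlgebra hG).mem_of_hasDerivAt_zero
    (fun c _ hQ => smul_mem_expLieAlgebra hQ c) hF hF0 hD

theorem hasDerivAt_exp_smul_zero [CompleteSpace 𝔸] (P : 𝔸) :
    HasDerivAt (fun u : ℝ => exp (u • P)) P 0 := by
  simpa using hasDerivAt_exp_smul_const (𝕂 := ℝ) P 0

end Normed

section Lohe

variable {n 𝕜 : Type*} [Fintype n] [DecidableEq n] [RCLike 𝕜] {G : Set (Matrix n n 𝕜)}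

theorem inv_exp_smul (u : ℝ) (P : Matrix n n 𝕜) : (exp (u • P))⁻¹ = exp (u • -P) := by
  rw [smul_neg, Matrix.exp_neg]

theorem add_mem_expLieAlgebra_of_lohe (hG : IsClosed G) (hmul : ∀ X ∈ G, ∀ Y ∈ G, X * Y ∈ G)
    (hLohe : ∀ Z ∈ G, Z - Z⁻¹ ∈ expLieAlgebra G)
    {P R : Matrix n n 𝕜} (hP : P ∈ expLieAlgebra G) (hR : R ∈ expLieAlgebra G) :
    P + R ∈ expLieAlgebra G := by
  let F : ℝ → Matrix n n 𝕜 := fun u => exp (u • P) * exp (u • R) - exp (u • -R) * exp (u • -P)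
  have hF : ∀ u, F u ∈ expLieAlgebra G := fun u => by
    have := hLohe _ (hmul _ (hP u) _ (hR u))
    rwa [Matrix.mul_inv_rev, inv_exp_smul, inv_exp_smul] at this
  have hF' : HasDerivAt F ((2 : ℝ) • (P + R)) 0 :=
    ((hasDerivAt_exp_smul_zero P).mul (hasDerivAt_exp_smul_zero R)).sub
      ((hasDerivAt_exp_smul_zero (-R)).mul (hasDerivAt_exp_smul_zero (-P)))
      |>.congr_deriv (by simp only [zero_smul, exp_zero, mul_one, one_mul, two_smul]; abel)
  have h2 : (2 : ℝ) • (P + R) ∈ expLieAlgebra G :=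
    mem_expLieAlgebra_of_hasDerivAt_zero hG hF (by simp [F]) hF'
  simpa using smul_mem_expLieAlgebra h2 2⁻¹

theorem sub_mem_expLieAlgebra_of_lohe (hG : IsClosed G) (hmul : ∀ X ∈ G, ∀ Y ∈ G, X * Y ∈ G)
    (hLohe : ∀ Z ∈ G, Z - Z⁻¹ ∈ expLieAlgebra G)
    {P R : Matrix n n 𝕜} (hP : P ∈ expLieAlgebra G) (hR : R ∈ expLieAlgebra G) :
    P - R ∈ expLieAlgebra G := by
  simpa [sub_eq_add_neg] using
    add_mem_expLieAlgebra_of_lohe hG hmul hLohe hP (neg_mem_expLieAlgebra hR)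

theorem mul_mul_add_inv_mul_mul_mem_expLieAlgebra_of_lohe (hG : IsClosed G)
    (hmul : ∀ X ∈ G, ∀ Y ∈ G, X * Y ∈ G) (hLohe : ∀ Z ∈ G, Z - Z⁻¹ ∈ expLieAlgebra G)
    {Y Z Q : Matrix n n 𝕜} (hY : Y ∈ G) (hZ : Z ∈ G) (hQ : Q ∈ expLieAlgebra G) :
    Y * Q * Z + Z⁻¹ * Q * Y⁻¹ ∈ expLieAlgebra G := by
  let B : ℝ → Matrix n n 𝕜 := fun u => Y * exp (u • Q) * Z - Z⁻¹ * (exp (u • -Q) * Y⁻¹)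
  have hB : ∀ u, B u ∈ expLieAlgebra G := fun u => by
    have := hLohe _ (hmul _ (hmul _ hY _ (hQ u)) _ hZ)
    rwa [Matrix.mul_inv_rev, Matrix.mul_inv_rev, inv_exp_smul] at this
  have hB' : HasDerivAt (fun u => B u - B 0) (Y * Q * Z + Z⁻¹ * Q * Y⁻¹) 0 :=
    ((((hasDerivAt_exp_smul_zero Q).const_mul Y).mul_const Z).sub
      (((hasDerivAt_exp_smul_zero (-Q)).mul_const Y⁻¹).const_mul Z⁻¹)).sub_const (B 0)
      |>.congr_deriv (by simp [mul_assoc])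
  exact mem_expLieAlgebra_of_hasDerivAt_zero hG
    (fun u => sub_mem_expLieAlgebra_of_lohe hG hmul hLohe (hB u) (hB 0)) (sub_self _) hB'

end Lohe

theorem lohe_infinitesimal_general {d : ℕ} (G : Set (Matrix (Fin d) (Fin d) ℂ))
    (hGclosed : IsClosed G)
    (hGmul : ∀ X ∈ G, ∀ Y ∈ G, X * Y ∈ G)
    (g : Set (Matrix (Fin d) (Fin d) ℂ))
    (hg : g = {Q : Matrix (Fin d) (Fin d) ℂ |
      ∀ t : ℝ, NormedSpace.exp ((t : ℂ) • Q) ∈ G})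
    (hLohe : ∀ Z ∈ G, Z - Z⁻¹ ∈ g)
    (Y Z Q : Matrix (Fin d) (Fin d) ℂ)
    (hY : Y ∈ G) (hZ : Z ∈ G) (hQ : Q ∈ g) :
    Y * Q * Z + Z⁻¹ * Q * Y⁻¹ ∈ g := by
  have hg_eq : g = expLieAlgebra G := by
    simp only [hg, Complex.coe_smul]
    rfl
  subst hg_eq
  exact mul_mul_add_inv_mul_mul_mem_expLieAlgebra_of_lohe hGclosed hGmul hLohe hY hZ hQ

/-- Infinitesimal Lohe property: if a closed matrix group `G` satisfies the
Lohe closure property (`Z - Z⁻¹` lies in the Lie algebra `𝔤` of `G` for all `Z ∈ G`),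
then for any `Y, Z ∈ G` and `Q ∈ 𝔤`, the matrix `Y⬝Q⬝Z + Z⁻¹⬝Q⬝Y⁻¹` lies in `𝔤`.
Here `𝔤 = {Q | ∀ t : ℝ, exp(tQ) ∈ G}` is the Lie algebra of `G`. -/
theorem lohe_infinitesimal {d : ℕ} (G : Set (Matrix (Fin d) (Fin d) ℂ))
    (hGclosed : IsClosed G)
    (hGone : (1 : Matrix (Fin d) (Fin d) ℂ) ∈ G)
    (hGmul : ∀ X ∈ G, ∀ Y ∈ G, X * Y ∈ G)
    (hGunit : ∀ X ∈ G, IsUnit X)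
    (hGinv : ∀ X ∈ G, X⁻¹ ∈ G)
    (g : Set (Matrix (Fin d) (Fin d) ℂ))
    (hg : g = {Q : Matrix (Fin d) (Fin d) ℂ |
      ∀ t : ℝ, NormedSpace.exp ((t : ℂ) • Q) ∈ G})
    (hLohe : ∀ Z ∈ G, Z - Z⁻¹ ∈ g)
    (Y Z Q : Matrix (Fin d) (Fin d) ℂ)
    (hY : Y ∈ G) (hZ : Z ∈ G) (hQ : Q ∈ g) :
    Y * Q * Z + Z⁻¹ * Q * Y⁻¹ ∈ g :=
  lohe_infinitesimal_general G hGclosed hGmul g hg hLohe Y Z Q hY hZ hQ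
end

section
/- Any matrix Lie group G defined by the condition Z ∈ G ⇔ Z* Q Z = Q, for a fixed invertible Hermitian matrix Q, has the Lohe closure property: Z - Z⁻¹ ∈ 𝔤 for all Z ∈ G, where 𝔤 = {W : W* Q + Q W = 0}. -/
open Matrix

/-- Any matrix group defined by `Zᴴ Q Z = Q` for a fixed invertible Hermitian `Q`
has the Lohe closure property: `Z - Z⁻¹` belongs to the Lie algebra
`𝔤 = {W | Wᴴ Q + Q W = 0}`. -/
theorem lohe_of_Q_group {d : ℕ} (Q : Matrix (Fin d) (Fin d) ℂ)
    (hQinv : IsUnit Q) (hQH : Q.IsHermitian)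
    (Z : Matrix (Fin d) (Fin d) ℂ) (hZunit : IsUnit Z)
    (hZ : Zᴴ * Q * Z = Q) :
    (Z - Z⁻¹)ᴴ * Q + Q * (Z - Z⁻¹) = 0 := by
  have hd : IsUnit Z.det := (Matrix.isUnit_iff_isUnit_det Z).mp hZunit
  have h1 : Zᴴ * Q = Q * Z⁻¹ := by
    calc Zᴴ * Q = Zᴴ * Q * (Z * Z⁻¹) := by rw [Matrix.mul_nonsing_inv _ hd, mul_one]
    _ = Q * Z⁻¹ := by rw [← mul_assoc, hZ]
  have h2 : Q * Z = Z⁻¹ᴴ * Q := by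
    have := congrArg Matrix.conjTranspose h1
    simpa [Matrix.conjTranspose_mul, hQH.eq] using this
  rw [Matrix.conjTranspose_sub, Matrix.sub_mul, Matrix.mul_sub, h1, ← h2]
  abel
end

section
/- Let Γ be a symmetric circulant graph on n vertices (γ_{ij} = γ_{|i−j| mod n}), let G be a matrix Lie group with Lohe closure, f(x) = x^p for some p ≥ 1, and T ∈ G with T ≠ I and Tⁿ = I. Then the twist configuration X_i = T^i satisfies, for every i, Σ_{j=1}^n γ_{ij}((X_j X_i⁻¹)^p − (X_i X_j⁻¹)^p) = 0; i.e. it is a fixed point of the homogeneous quantum Kuramoto system. -/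
open Matrix

/-!
With `Xᵢ = Tⁱ` and `Tⁿ = 1`, the coupling term `Xⱼ Xᵢ⁻¹` equals `T^(j - i)` with the exponent
read in `ZMod n`, so the `i`-th equation is `∑ⱼ γ(i - j) • (A(j - i) - A(i - j))` with
`A k = (T^k)ᵖ`. Reindexing by `k = j - i` and by `k = i - j` turns both halves into
`∑ₖ γ(k) • A(k)`, using `γ(-k) = γ(k)`, so they cancel.
-/

theorem sum_circulant_smul_sub_eq_zero {G R M : Type*} [AddCommGroup G] [Fintype G]
    [Semiring R] [AddCommGroup M] [Module R M]
    {γ : G → R} (hγ : ∀ k, γ (-k) = γ k) (A : G → M) (i : G) :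
    ∑ j, γ (i - j) • (A (j - i) - A (i - j)) = 0 := by
  have h_sub : ∑ j, γ (i - j) • A (i - j) = ∑ k, γ k • A k :=
    (Equiv.subLeft i).sum_comp fun k => γ k • A k
  have h_neg : ∑ j, γ (i - j) • A (j - i) = ∑ k, γ k • A k := by
    calc ∑ j, γ (i - j) • A (j - i) = ∑ j, γ (i - j) • A (-(i - j)) := by simp only [neg_sub]
      _ = ∑ k, γ k • A (-k) := (Equiv.subLeft i).sum_comp fun k => γ k • A (-k)
      _ = ∑ k, γ (-k) • A (-k) := by simp only [hγ]
      _ = ∑ k, γ k • A k := Equiv.sum_comp (Equiv.neg G) fun k => γ k • A k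
  simp only [smul_sub, Finset.sum_sub_distrib, h_sub, h_neg, sub_self]

theorem pow_val_mul_pow_val {M : Type*} [Monoid M] {n : ℕ} [NeZero n] {T : M}
    (hTn : T ^ n = 1) (a b : ZMod n) :
    T ^ a.val * T ^ b.val = T ^ (a + b).val := by
  rw [← pow_add, pow_eq_pow_mod _ hTn, ZMod.val_add]

theorem Matrix.pow_val_mul_inv_pow_val {ι R : Type*} [Fintype ι] [DecidableEq ι] [CommRing R]
    {n : ℕ} [NeZero n] {T : Matrix ι ι R} (hTn : T ^ n = 1) (a b : ZMod n) :
    T ^ a.val * (T ^ b.val)⁻¹ = T ^ (a - b).val := by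
  have h_inv : (T ^ b.val)⁻¹ = T ^ (-b).val :=
    inv_eq_right_inv (by rw [pow_val_mul_pow_val hTn, add_neg_cancel, ZMod.val_zero, pow_zero])
  rw [h_inv, pow_val_mul_pow_val hTn, sub_eq_add_neg]

theorem twist_is_fixed_point_general {d n : ℕ} [NeZero n]
    (γ : ZMod n → ℝ) (hγ : ∀ k, γ (-k) = γ k)
    (T : Matrix (Fin d) (Fin d) ℂ)
    (hTn : T ^ n = 1)
    (p : ℕ)
    (X : ZMod n → Matrix (Fin d) (Fin d) ℂ)
    (hX : ∀ i : ZMod n, X i = T ^ (i.val)) :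
    ∀ i : ZMod n,
      ∑ j : ZMod n, γ (i - j) •
        ((X j * (X i)⁻¹) ^ p - (X i * (X j)⁻¹) ^ p) = 0 := by
  intro i
  simp only [hX, pow_val_mul_inv_pow_val hTn]
  exact sum_circulant_smul_sub_eq_zero hγ (fun k => (T ^ k.val) ^ p) i

/-- On a symmetric circulant graph (`γᵢⱼ` depending only on `i - j` mod `n`,
with `γ(k) = γ(-k)`), the twist configuration `Xᵢ = Tⁱ` generated by `T ∈ G`
with `T ≠ 1`, `Tⁿ = 1` is a fixed point of the homogeneous quantum Kuramoto
system with `f(x) = xᵖ`: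
`Σⱼ γᵢⱼ ((Xⱼ Xᵢ⁻¹)ᵖ - (Xᵢ Xⱼ⁻¹)ᵖ) = 0` for every `i`. -/
theorem twist_is_fixed_point {d n : ℕ} [NeZero n]
    (γ : ZMod n → ℝ) (hγ : ∀ k, γ (-k) = γ k)
    (T : Matrix (Fin d) (Fin d) ℂ)
    (hTunit : IsUnit T) (hTn : T ^ n = 1) (hTne : T ≠ 1)
    (p : ℕ) (hp : 1 ≤ p)
    (X : ZMod n → Matrix (Fin d) (Fin d) ℂ)
    (hX : ∀ i : ZMod n, X i = T ^ (i.val)) :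
    ∀ i : ZMod n,
      ∑ j : ZMod n, γ (i - j) •
        ((X j * (X i)⁻¹) ^ p - (X i * (X j)⁻¹) ^ p) = 0 :=
  twist_is_fixed_point_general γ hγ T hTn p X hX
end

section
/- Let A be real symmetric and B, C real skew-symmetric n×n matrices, and let Q be the 4n×4n block matrix [[A,B,C,0],[−B,A,0,C],[−C,0,A,B],[0,−C,−B,A]]. If x + iy is an eigenvector of A + i(B + C) with real eigenvalue μ, then (x, −y, −y, −x) is an eigenvector of Q with eigenvalue μ. Analogous correspondences hold for A − i(B+C) and A ± i(B−C), so the spectrum of Q consists of the eigenvalues of A + i(B+C) and A + i(B−C), each repeated twice. -/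
open Matrix

section Aux

open Polynomial

variable {m : Type*} [Fintype m] [DecidableEq m] {R : Type*} [CommRing R]

lemma my_charpoly_conj (P Pinv M : Matrix m m R) (h1 : P * Pinv = 1) (h2 : Pinv * P = 1) :
    (Pinv * M * P).charpoly = M.charpoly := by
  have hPP : Pinv.map (Polynomial.C : R → R[X]) * P.map Polynomial.C = 1 := by
    rw [← Matrix.map_mul (f := (Polynomial.C : R →+* R[X])), h2, Matrix.map_one]
    · exact map_zero _
    · exact map_one _
  have key : charmatrix (Pinv * M * P) =
      Pinv.map (Polynomial.C : R → R[X]) * charmatrix M * P.map Polynomial.C := by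
    rw [charmatrix, charmatrix, RingHom.mapMatrix_apply, RingHom.mapMatrix_apply,
      Matrix.map_mul (f := (Polynomial.C : R →+* R[X])),
      Matrix.map_mul (f := (Polynomial.C : R →+* R[X])), mul_sub, sub_mul]
    congr 1
    rw [← (Matrix.scalar_commute (X : R[X]) (fun r => Commute.all _ r) _).eq, mul_assoc, hPP,
      mul_one]
  have hdet : (Pinv.map (Polynomial.C : R → R[X])).det * (P.map Polynomial.C).det = 1 := by
    rw [← det_mul, hPP, det_one]
  rw [charpoly, charpoly, key, det_mul, det_mul]
  ring_nf
  rw [mul_comm, ← mul_assoc]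
  rw [mul_comm ((P.map _).det)]
  rw [hdet, one_mul]

lemma my_charpoly_transpose (M : Matrix m m R) : Mᵀ.charpoly = M.charpoly := by
  rw [charpoly, charpoly, ← det_transpose (charmatrix M)]
  congr 1
  rw [charmatrix, charmatrix, RingHom.mapMatrix_apply, RingHom.mapMatrix_apply, transpose_sub,
    transpose_map]
  congr 1
  simp [Matrix.scalar]

lemma key_block (X Y : Matrix m m ℂ) :
    (fromBlocks X Y (-Y) X).charpoly =
      (X + Complex.I • Y).charpoly * (X - Complex.I • Y).charpoly := by
  have h1 : (fromBlocks 1 1 (Complex.I • 1) (-(Complex.I • 1)) : Matrix (m ⊕ m) (m ⊕ m) ℂ) *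
      fromBlocks ((1/2 : ℂ) • 1) (-((Complex.I/2) • 1)) ((1/2 : ℂ) • 1) ((Complex.I/2) • 1) = 1 := by
    rw [fromBlocks_multiply, ← fromBlocks_one]
    rw [fromBlocks_inj]
    refine ⟨?_, ?_, ?_, ?_⟩ <;>
      · simp only [Matrix.smul_mul, Matrix.mul_smul, Matrix.one_mul, Matrix.mul_one, smul_smul,
          Matrix.neg_mul, Matrix.mul_neg, neg_smul, smul_neg, neg_neg]
        match_scalars <;> (simp [Complex.ext_iff]; try norm_num)
  have h2 : (fromBlocks ((1/2 : ℂ) • 1) (-((Complex.I/2) • 1)) ((1/2 : ℂ) • 1) ((Complex.I/2) • 1) :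
        Matrix (m ⊕ m) (m ⊕ m) ℂ) *
      fromBlocks 1 1 (Complex.I • 1) (-(Complex.I • 1)) = 1 := by
    rw [fromBlocks_multiply, ← fromBlocks_one]
    rw [fromBlocks_inj]
    refine ⟨?_, ?_, ?_, ?_⟩ <;>
      · simp only [Matrix.smul_mul, Matrix.mul_smul, Matrix.one_mul, Matrix.mul_one, smul_smul,
          Matrix.neg_mul, Matrix.mul_neg, neg_smul, smul_neg, neg_neg]
        match_scalars <;> (simp [Complex.ext_iff]; try norm_num)
  have hconj : (fromBlocks ((1/2 : ℂ) • 1) (-((Complex.I/2) • 1)) ((1/2 : ℂ) • 1)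
        ((Complex.I/2) • 1) : Matrix (m ⊕ m) (m ⊕ m) ℂ) * fromBlocks X Y (-Y) X *
      fromBlocks 1 1 (Complex.I • 1) (-(Complex.I • 1)) =
      fromBlocks (X + Complex.I • Y) 0 0 (X - Complex.I • Y) := by
    rw [fromBlocks_multiply, fromBlocks_multiply, fromBlocks_inj]
    refine ⟨?_, ?_, ?_, ?_⟩ <;>
      · simp only [Matrix.smul_mul, Matrix.mul_smul, Matrix.one_mul, Matrix.mul_one, smul_smul,
          Matrix.neg_mul, Matrix.mul_neg, neg_smul, smul_neg, neg_neg, Matrix.add_mul,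
          Matrix.mul_add]
        match_scalars <;> (simp [Complex.ext_iff]; try ring; try norm_num)
  calc (fromBlocks X Y (-Y) X).charpoly
      = (fromBlocks (X + Complex.I • Y) 0 0 (X - Complex.I • Y)).charpoly := by
        rw [← hconj, my_charpoly_conj _ _ _ h1 h2]
    _ = (X + Complex.I • Y).charpoly * (X - Complex.I • Y).charpoly := by
        rw [charpoly_fromBlocks_zero₂₁]

end Aux

/-- For `A` real symmetric and `B, C` real skew-symmetric, and the `4n×4n`
block matrix `Q = [[A,B,C,0],[-B,A,0,C],[-C,0,A,B],[0,-C,-B,A]]`: if `x + iy`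
is an eigenvector of `A + i(B+C)` with real eigenvalue `μ`, then
`(x, -y, -y, -x)` is an eigenvector of `Q` with eigenvalue `μ`; and the
spectrum of `Q` consists of the eigenvalues of `A + i(B+C)` and `A + i(B-C)`,
each repeated twice (charpoly identity). -/
theorem four_block_eigen {n : ℕ}
    (A B C : Matrix (Fin n) (Fin n) ℝ)
    (hA : Aᵀ = A) (hB : Bᵀ = -B) (hC : Cᵀ = -C)
    (Q : Matrix ((Fin n ⊕ Fin n) ⊕ (Fin n ⊕ Fin n))
          ((Fin n ⊕ Fin n) ⊕ (Fin n ⊕ Fin n)) ℝ)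
    (hQ : Q = Matrix.fromBlocks
      (Matrix.fromBlocks A B (-B) A) (Matrix.fromBlocks C 0 0 C)
      (Matrix.fromBlocks (-C) 0 0 (-C)) (Matrix.fromBlocks A B (-B) A))
    (Mp Mm : Matrix (Fin n) (Fin n) ℂ)
    (hMp : Mp = A.map (fun t => (t : ℂ)) +
      Complex.I • (B + C).map (fun t => (t : ℂ)))
    (hMm : Mm = A.map (fun t => (t : ℂ)) +
      Complex.I • (B - C).map (fun t => (t : ℂ)))
    (x y : Fin n → ℝ) (μ : ℝ)
    (heig : Mp.mulVec (fun i => (x i : ℂ) + (y i : ℂ) * Complex.I) =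
      (μ : ℂ) • fun i => (x i : ℂ) + (y i : ℂ) * Complex.I) :
    Q.mulVec (Sum.elim (Sum.elim x (fun i => -y i))
        (Sum.elim (fun i => -y i) (fun i => -x i))) =
      μ • Sum.elim (Sum.elim x (fun i => -y i))
        (Sum.elim (fun i => -y i) (fun i => -x i)) ∧
    Q.charpoly.map (algebraMap ℝ ℂ) = Mp.charpoly ^ 2 * Mm.charpoly ^ 2 := by
  constructor
  · -- the eigenvector part
    have key : ∀ i, (∑ j, A i j * x j - ∑ j, (B i j + C i j) * y j = μ * x i) ∧
        (∑ j, (B i j + C i j) * x j + ∑ j, A i j * y j = μ * y i) := by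
      intro i
      have h := congrFun heig i
      rw [hMp] at h
      simp only [Matrix.mulVec, dotProduct, Matrix.add_apply, Matrix.smul_apply,
        Matrix.map_apply, Matrix.add_apply, smul_eq_mul, Pi.smul_apply] at h
      rw [Complex.ext_iff] at h
      simp only [Complex.re_sum, Complex.im_sum, Complex.add_re, Complex.add_im, Complex.mul_re,
        Complex.mul_im, Complex.ofReal_re, Complex.ofReal_im, Complex.I_re, Complex.I_im,
        Complex.mul_re, Complex.mul_im, mul_zero, zero_mul, mul_one, add_zero, zero_add,
        sub_zero, zero_sub] at h
      obtain ⟨hre, him⟩ := h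
      constructor
      · rw [← hre, ← Finset.sum_sub_distrib]
        apply Finset.sum_congr rfl
        intro j _
        ring
      · rw [← him, ← Finset.sum_add_distrib]
        apply Finset.sum_congr rfl
        intro j _
        ring
    have h1 : ∀ i, ∑ j, A i j * x j - ∑ j, (B i j + C i j) * y j = μ * x i :=
      fun i => (key i).1
    have h2 : ∀ i, ∑ j, (B i j + C i j) * x j + ∑ j, A i j * y j = μ * y i :=
      fun i => (key i).2
    subst hQ
    simp only [add_mul, Finset.sum_add_distrib] at h1 h2
    funext i
    rcases i with (i | i) | (i | i) <;>
      · simp only [Matrix.mulVec, dotProduct, Fintype.sum_sum_type, fromBlocks_apply₁₁,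
          fromBlocks_apply₁₂, fromBlocks_apply₂₁, fromBlocks_apply₂₂, Sum.elim_inl, Sum.elim_inr,
          Pi.smul_apply, smul_eq_mul, Matrix.neg_apply, Matrix.zero_apply, mul_neg, neg_mul,
          neg_neg, Finset.sum_neg_distrib, Finset.sum_const_zero, zero_mul, add_zero, zero_add,
          mul_zero]
        linarith [h1 i, h2 i]
  · -- the charpoly part
    set f : ℝ → ℂ := fun t => (t : ℂ) with hf
    have hfadd : ∀ a b : ℝ, f (a + b) = f a + f b := by
      intro a b; simp only [hf]; push_cast; ring
    have hfneg : ∀ a : ℝ, f (-a) = -f a := by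
      intro a; simp only [hf]; push_cast; ring
    set A' : Matrix (Fin n) (Fin n) ℂ := A.map f with hA'
    set B' : Matrix (Fin n) (Fin n) ℂ := B.map f with hB'
    set C' : Matrix (Fin n) (Fin n) ℂ := C.map f with hC'
    have hBC : (B + C).map f = B' + C' := Matrix.map_add f hfadd B C
    have hBC' : (B - C).map f = B' - C' := by
      have : ∀ a b : ℝ, f (a - b) = f a - f b := by
        intro a b; simp only [hf]; push_cast; ring
      exact Matrix.map_sub f this B C
    have hnB : (-B).map f = -B' := by
      ext i j; simp [hB', Matrix.map_apply, hfneg]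
    have hnC : (-C).map f = -C' := by
      ext i j; simp [hC', Matrix.map_apply, hfneg]
    have htA : A'ᵀ = A' := by rw [hA', ← transpose_map, hA]
    have htB : B'ᵀ = -B' := by rw [hB', ← transpose_map, hB, hnB]
    have htC : C'ᵀ = -C' := by rw [hC', ← transpose_map, hC, hnC]
    have hQmap : Q.map f = fromBlocks (fromBlocks A' B' (-B') A') (fromBlocks C' 0 0 C')
        (-(fromBlocks C' 0 0 C')) (fromBlocks A' B' (-B') A') := by
      rw [hQ]
      simp only [fromBlocks_map, hnB, hnC, Matrix.map_zero f (by simp [hf]), ← hA', ← hB', ← hC']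
      simp [fromBlocks_neg]
    have hchar : Q.charpoly.map (algebraMap ℝ ℂ) = (Q.map f).charpoly := by
      rw [← Matrix.charpoly_map Q (algebraMap ℝ ℂ)]
      congr 1
    rw [hchar, hQmap, key_block]
    have e1 : (fromBlocks A' B' (-B') A' : Matrix ((Fin n) ⊕ (Fin n)) _ ℂ) +
        Complex.I • fromBlocks C' 0 0 C' = fromBlocks (A' + Complex.I • C') B'
          (-B') (A' + Complex.I • C') := by
      rw [fromBlocks_smul, fromBlocks_add]
      simp
    have e2 : (fromBlocks A' B' (-B') A' : Matrix ((Fin n) ⊕ (Fin n)) _ ℂ) -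
        Complex.I • fromBlocks C' 0 0 C' = fromBlocks (A' - Complex.I • C') B'
          (-B') (A' - Complex.I • C') := by
      rw [fromBlocks_smul, sub_eq_add_neg, fromBlocks_neg, fromBlocks_add]
      simp [sub_eq_add_neg]
    rw [e1, e2, key_block, key_block]
    have c1 : (A' + Complex.I • C' + Complex.I • B').charpoly = Mp.charpoly := by
      rw [hMp, hBC]
      congr 1
      module
    have c2 : (A' + Complex.I • C' - Complex.I • B').charpoly = Mm.charpoly := by
      rw [← my_charpoly_transpose (A' + Complex.I • C' - Complex.I • B'), hMm, hBC']
      congr 1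
      rw [transpose_sub, transpose_add, transpose_smul, transpose_smul, htA, htB, htC]
      module
    have c3 : (A' - Complex.I • C' + Complex.I • B').charpoly = Mm.charpoly := by
      rw [hMm, hBC']
      congr 1
      module
    have c4 : (A' - Complex.I • C' - Complex.I • B').charpoly = Mp.charpoly := by
      rw [← my_charpoly_transpose (A' - Complex.I • C' - Complex.I • B'), hMp, hBC]
      congr 1
      rw [transpose_sub, transpose_sub, transpose_smul, transpose_smul, htA, htB, htC]
      module
    rw [c1, c2, c3, c4]
    ring
end

section
/- For every even positive integer m and α ∈ (0,1/2), define I_m(α) = ∫₀^{2πα} cos(x)(cos(mx) − 1) dx. Then I_m satisfies the symmetry I_m(α) = I_m(1/2 − α), and I_m(α) ≤ 0 for all α ∈ (0, 1/2). -/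
open Real intervalIntegral

/-! The substitution `x ↦ π - x` turns `cos x (cos (m x) - 1)` into its negative when `m` is
even, and an integrand that is odd about `a / 2` has `∫₀^{a-s} = ∫₀^s` (its integral over
`[0, a]` vanishes). Nonpositivity then only has to be checked for `2πα ≤ π / 2`, where
`cos x ≥ 0 ≥ cos (m x) - 1`. -/

theorem intervalIntegral.integral_zero_sub_eq_of_neg_reflect {f : ℝ → ℝ} (hf : Continuous f)
    {a : ℝ} (hrefl : ∀ x, f (a - x) = -f x) (s : ℝ) :
    ∫ x in (0 : ℝ)..(a - s), f x = ∫ x in (0 : ℝ)..s, f x := by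
  have hsub : ∀ b, ∫ x in (0 : ℝ)..b, f x = -∫ x in (a - b)..a, f x := fun b =>
    calc ∫ x in (0 : ℝ)..b, f x = ∫ x in (0 : ℝ)..b, -f (a - x) := by simp_rw [hrefl, neg_neg]
      _ = -∫ x in (a - b)..a, f x := by rw [integral_neg, integral_comp_sub_left, sub_zero]
  have hwhole := hsub a
  rw [sub_self] at hwhole
  have hsplit := integral_add_adjacent_intervals
    (hf.intervalIntegrable (μ := MeasureTheory.volume) 0 s) (hf.intervalIntegrable s a)
  rw [hsub (a - s), sub_sub_cancel]
  linarith

theorem cos_pi_sub_mul_cos_mul_pi_sub_sub_one {m : ℕ} (hm : Even m) (x : ℝ) :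
    cos (π - x) * (cos (m * (π - x)) - 1) = -(cos x * (cos (m * x) - 1)) := by
  obtain ⟨k, rfl⟩ := hm
  have hcos : cos (((k + k : ℕ) : ℝ) * (π - x)) = cos (((k + k : ℕ) : ℝ) * x) := by
    rw [show ((k + k : ℕ) : ℝ) * (π - x) = k * (2 * π) - (k + k : ℕ) * x by push_cast; ring,
      cos_nat_mul_two_pi_sub]
  rw [hcos, cos_pi_sub]
  ring

theorem integral_cos_mul_cos_mul_sub_one_nonpos (m : ℝ) {t : ℝ} (ht₀ : 0 ≤ t)
    (ht : t ≤ π / 2) : ∫ x in (0 : ℝ)..t, cos x * (cos (m * x) - 1) ≤ 0 := by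
  have hle : ∫ x in (0 : ℝ)..t, cos x * (cos (m * x) - 1) ≤ ∫ _ in (0 : ℝ)..t, (0 : ℝ) := by
    refine integral_mono_on ht₀ ((by fun_prop : Continuous _).intervalIntegrable _ _)
      intervalIntegrable_const fun x hx => ?_
    have hcos : 0 ≤ cos x :=
      cos_nonneg_of_mem_Icc ⟨by linarith [hx.1, pi_pos], hx.2.trans ht⟩
    exact mul_nonpos_of_nonneg_of_nonpos hcos (by linarith [cos_le_one (m * x)])
  simpa using hle

theorem Im_even_nonpos_general (m : ℕ) (hme : Even m)
    (I : ℝ → ℝ)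
    (hI : I = fun α => ∫ x in (0 : ℝ)..(2 * π * α),
      Real.cos x * (Real.cos (m * x) - 1)) :
    ∀ α : ℝ, 0 < α → α < 1 / 2 → I α = I (1 / 2 - α) ∧ I α ≤ 0 := by
  subst hI
  have hsym : ∀ β : ℝ, ∫ x in (0 : ℝ)..(2 * π * (1 / 2 - β)), cos x * (cos (m * x) - 1) =
      ∫ x in (0 : ℝ)..(2 * π * β), cos x * (cos (m * x) - 1) := fun β => by
    rw [show 2 * π * (1 / 2 - β) = π - 2 * π * β by ring]
    exact integral_zero_sub_eq_of_neg_reflect (by fun_prop)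
      (cos_pi_sub_mul_cos_mul_pi_sub_sub_one hme) _
  have hquarter : ∀ β : ℝ, 0 < β → β ≤ 1 / 4 →
      ∫ x in (0 : ℝ)..(2 * π * β), cos x * (cos (m * x) - 1) ≤ 0 := fun β hβ₀ hβ =>
    integral_cos_mul_cos_mul_sub_one_nonpos _ (by positivity) (by nlinarith [pi_pos])
  intro α hα₀ hα
  dsimp only
  refine ⟨(hsym α).symm, ?_⟩
  rcases le_total α (1 / 4) with hα' | hα'
  · exact hquarter α hα₀ hα'
  · rw [← hsym α]
    exact hquarter (1 / 2 - α) (by linarith) (by linarith)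

/-- For even positive `m` and `α ∈ (0, 1/2)`, with
`I_m(α) = ∫₀^{2πα} cos x (cos(mx) - 1) dx`, one has the symmetry
`I_m(α) = I_m(1/2 - α)` and `I_m(α) ≤ 0`. -/
theorem Im_even_nonpos (m : ℕ) (hm : 0 < m) (hme : Even m)
    (I : ℝ → ℝ)
    (hI : I = fun α => ∫ x in (0 : ℝ)..(2 * π * α),
      Real.cos x * (Real.cos (m * x) - 1)) :
    ∀ α : ℝ, 0 < α → α < 1 / 2 → I α = I (1 / 2 - α) ∧ I α ≤ 0 :=
  Im_even_nonpos_general m hme I hI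
end
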